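/- Let β > 0, p > 1 with Hölder conjugate p̂, and 0 < y < 1. For the geometric probability sequence λ(n) = (1-y²)·y^{2n} one has the exact evaluation E_p(λ) = (p·p̂/(4·(1-y²)))·e^{β/2}·(y^{2/p} - e^{-β/p})·(y^{2/p̂} - e^{-β/p̂}). -/

import Mathlib

/-!
If `λ(n+1) = x λ(n)`, then `λ(n)^{1/p̂} λ(n+1)^{1/p} = x^{1/p} λ(n)` because `1/p + 1/p̂ = 1`,
so the two cross series of `E_p(λ)` are multiples of `∑ (n+1) λ(n)`. For the geometric sequence
`λ(n) = (1-x) xⁿ` the moments are `∑ (n+1) λ(n) = 1/(1-x)` and `∑ n λ(n) = x/(1-x)`, and the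
resulting bracket factors since `x^{1/p} x^{1/p̂} = x` and `e^{-β/p} e^{-β/p̂} = e^{-β}`.
Finally take `x = y²`.
-/

open Real

/-- The classical Dirichlet form of the quantum Ornstein–Uhlenbeck semigroup with
parameter `β`, evaluated on a state diagonal in the Fock basis. -/
noncomputable def dirichletFormP (β p phat : ℝ) (lam : ℕ → ℝ) : ℝ :=
  p * phat / 4 *
    (Real.exp (-β/2) * (∑' n : ℕ, ((n : ℝ) + 1) * lam n
        - Real.exp (β/p) * ∑' n : ℕ, ((n : ℝ) + 1) * lam n ^ (1/phat) * lam (n+1) ^ (1/p))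
      + Real.exp (β/2) * (∑' n : ℕ, (n : ℝ) * lam n
        - Real.exp (-β/p) * ∑' n : ℕ, ((n : ℝ) + 1) * lam (n+1) ^ (1/phat) * lam n ^ (1/p)))

theorem tsum_succ_mul_geometric_of_norm_lt_one {𝕜 : Type*} [NormedField 𝕜] {x : 𝕜}
    (hx : ‖x‖ < 1) : ∑' n : ℕ, ((n : 𝕜) + 1) * x ^ n = 1 / (1 - x) ^ 2 := by
  have hsum : HasSum (fun n : ℕ => ((n : 𝕜) + 1) * x ^ n) (x / (1 - x) ^ 2 + (1 - x)⁻¹) := by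
    simpa only [add_mul, one_mul] using
      (hasSum_coe_mul_geometric_of_norm_lt_one hx).add (hasSum_geometric_of_norm_lt_one hx)
  have hx1 : 1 - x ≠ 0 := (isUnit_one_sub_of_norm_lt_one hx).ne_zero
  rw [hsum.tsum_eq]
  field_simp
  ring

theorem tsum_succ_mul_geometricSeq {x : ℝ} (hx : ‖x‖ < 1) :
    ∑' n : ℕ, ((n : ℝ) + 1) * ((1 - x) * x ^ n) = 1 / (1 - x) := by
  have hx1 : 1 - x ≠ 0 := (isUnit_one_sub_of_norm_lt_one hx).ne_zero
  simp_rw [mul_left_comm _ (1 - x)]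
  rw [tsum_mul_left, tsum_succ_mul_geometric_of_norm_lt_one hx]
  field_simp

theorem tsum_coe_mul_geometricSeq {x : ℝ} (hx : ‖x‖ < 1) :
    ∑' n : ℕ, (n : ℝ) * ((1 - x) * x ^ n) = x / (1 - x) := by
  have hx1 : 1 - x ≠ 0 := (isUnit_one_sub_of_norm_lt_one hx).ne_zero
  simp_rw [mul_left_comm _ (1 - x)]
  rw [tsum_mul_left, tsum_coe_mul_geometric_of_norm_lt_one hx]
  field_simp

theorem rpow_mul_mul_rpow_of_add_eq_one {u x s t : ℝ} (hu : 0 ≤ u) (hx : 0 ≤ x)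
    (hst : s + t = 1) : u ^ s * (x * u) ^ t = x ^ t * u := by
  rw [mul_rpow hx hu, mul_left_comm, ← rpow_add' hu (by rw [hst]; exact one_ne_zero), hst,
    rpow_one]

theorem dirichletFormP_of_succ_eq_mul {β p phat x : ℝ} {lam : ℕ → ℝ} (hx : 0 ≤ x)
    (hlam : ∀ n, 0 ≤ lam n) (hsucc : ∀ n, lam (n + 1) = x * lam n)
    (hconj : 1 / p + 1 / phat = 1) :
    dirichletFormP β p phat lam = p * phat / 4 *
      (exp (-β / 2) * (1 - exp (β / p) * x ^ (1 / p)) * ∑' n : ℕ, ((n : ℝ) + 1) * lam n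
        + exp (β / 2) * (∑' n : ℕ, (n : ℝ) * lam n
          - exp (-β / p) * x ^ (1 / phat) * ∑' n : ℕ, ((n : ℝ) + 1) * lam n)) := by
  have hcross : ∑' n : ℕ, ((n : ℝ) + 1) * lam n ^ (1 / phat) * lam (n + 1) ^ (1 / p)
      = x ^ (1 / p) * ∑' n : ℕ, ((n : ℝ) + 1) * lam n := by
    rw [← tsum_mul_left]
    congr 1 with n
    rw [mul_assoc, hsucc, rpow_mul_mul_rpow_of_add_eq_one (hlam n) hx (by linarith)]
    ring
  have hcross' : ∑' n : ℕ, ((n : ℝ) + 1) * lam (n + 1) ^ (1 / phat) * lam n ^ (1 / p)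
      = x ^ (1 / phat) * ∑' n : ℕ, ((n : ℝ) + 1) * lam n := by
    rw [← tsum_mul_left]
    congr 1 with n
    rw [mul_assoc, mul_comm (lam _ ^ _), hsucc, rpow_mul_mul_rpow_of_add_eq_one (hlam n) hx hconj]
    ring
  rw [dirichletFormP, hcross, hcross']
  ring

theorem exp_rpow_bracket_eq_mul_sub_mul_sub {β p phat x : ℝ} (hx : 0 ≤ x)
    (hconj : 1 / p + 1 / phat = 1) :
    exp (-β / 2) * (1 - exp (β / p) * x ^ (1 / p))
        + exp (β / 2) * (x - exp (-β / p) * x ^ (1 / phat))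
      = exp (β / 2) * (x ^ (1 / p) - exp (-β / p)) * (x ^ (1 / phat) - exp (-β / phat)) := by
  have hx : x ^ (1 / p) * x ^ (1 / phat) = x := by
    rw [← rpow_add' hx (by rw [hconj]; exact one_ne_zero), hconj, rpow_one]
  have hexp : exp (β / 2) * exp (-β / p) * exp (-β / phat) = exp (-β / 2) := by
    rw [← exp_add, ← exp_add]
    congr 1
    linear_combination (-β) * hconj
  have hexp' : exp (-β / 2) * exp (β / p) = exp (β / 2) * exp (-β / phat) := by
    rw [← exp_add, ← exp_add]
    congr 1
    linear_combination β * hconj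
  linear_combination (-exp (β / 2)) * hx - hexp - x ^ (1 / p) * hexp'

theorem dirichletFormP_geometricSeq {β p phat x : ℝ} (hx0 : 0 ≤ x) (hx1 : x < 1)
    (hconj : 1 / p + 1 / phat = 1) :
    dirichletFormP β p phat (fun n => (1 - x) * x ^ n)
      = p * phat / (4 * (1 - x)) * exp (β / 2)
          * (x ^ (1 / p) - exp (-β / p)) * (x ^ (1 / phat) - exp (-β / phat)) := by
  have hnorm : ‖x‖ < 1 := by rwa [Real.norm_of_nonneg hx0]
  have hsub : 1 - x ≠ 0 := by linarith
  calc dirichletFormP β p phat (fun n => (1 - x) * x ^ n)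
      = p * phat / (4 * (1 - x)) * (exp (-β / 2) * (1 - exp (β / p) * x ^ (1 / p))
          + exp (β / 2) * (x - exp (-β / p) * x ^ (1 / phat))) := by
        rw [dirichletFormP_of_succ_eq_mul hx0
            (fun n => mul_nonneg (by linarith) (pow_nonneg hx0 n)) (fun n => by ring) hconj,
          tsum_succ_mul_geometricSeq hnorm, tsum_coe_mul_geometricSeq hnorm]
        field_simp
    _ = _ := by rw [exp_rpow_bracket_eq_mul_sub_mul_sub hx0 hconj]; ring

theorem dirichletFormP_geometric_general (β p phat : ℝ)
    (hconj : 1/p + 1/phat = 1)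
    (y : ℝ) (hy0 : 0 < y) (hy1 : y < 1) :
    dirichletFormP β p phat (fun n => (1 - y^2) * (y^2) ^ n)
      = p * phat / (4 * (1 - y^2)) * Real.exp (β/2)
          * (y ^ (2/p) - Real.exp (-β/p)) * (y ^ (2/phat) - Real.exp (-β/phat)) := by
  have hsq : ∀ q : ℝ, y ^ (2 / q) = (y ^ 2) ^ (1 / q) := fun q => by
    rw [← rpow_natCast_mul hy0.le, mul_one_div, Nat.cast_ofNat]
  rw [hsq, hsq]
  exact dirichletFormP_geometricSeq (by positivity) (by nlinarith) hconj

/-- Exact evaluation of the Dirichlet form `E_p` on the geometric probability sequence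
`λ(n) = (1-y²)·y^{2n}`. -/
theorem dirichletFormP_geometric (β p phat : ℝ) (hβ : 0 < β)
    (hp : 1 < p) (hconj : 1/p + 1/phat = 1)
    (y : ℝ) (hy0 : 0 < y) (hy1 : y < 1) :
    dirichletFormP β p phat (fun n => (1 - y^2) * (y^2) ^ n)
      = p * phat / (4 * (1 - y^2)) * Real.exp (β/2)
          * (y ^ (2/p) - Real.exp (-β/p)) * (y ^ (2/phat) - Real.exp (-β/phat)) :=
  dirichletFormP_geometric_general β p phat hconj y hy0 hy1
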